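/- Suppose r : ℝ → ℂ is continuous with |r(τ)| ≤ 1, |r(τ)| = 1 only at τ = 0 with at most logarithmic blow-up of F(|r(τ)|) near τ = 0, and |r(τ)| ≤ M/|τ|^α for large |τ| with α > 1. Then ∫_{-∞}^{∞} |r(τ)|·₃F₂(1,1,1;3/2,3/2;|r(τ)|²) dτ < ∞. -/

import Mathlib

/-!
Since `k! ≤ (3/2)_k`, the series `₃F₂(1,1,1;3/2,3/2;z)` is dominated by the geometric series,
so `x · ₃F₂(1,1,1;3/2,3/2;x²) ≤ x / (1 - ρ²)` whenever `0 ≤ x ≤ ρ < 1`. Away from `τ = 0` the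
continuous function `‖r‖` tends to `0` at infinity and stays below `1`, hence below some
`ρ < 1`; there the integrand is dominated by a multiple of `‖r‖`, which is integrable by the
`|τ|^{-α}` decay with `α > 1`. Near `τ = 0` it is dominated by `A + B |log |τ||`, which is
locally integrable.
-/

open MeasureTheory Real Set Filter Topology Asymptotics Metric

/-- Pochhammer (rising factorial) symbol `(a)_k`. -/
noncomputable def poch (a : ℝ) (k : ℕ) : ℝ := ∏ i ∈ Finset.range k, (a + i)

/-- The zero-balanced generalized hypergeometric series `₃F₂(1,1,1;3/2,3/2;z)`. -/
noncomputable def F32 (z : ℝ) : ℝ :=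
  ∑' k : ℕ, ((k.factorial : ℝ) / poch (3/2) k)^2 * z^k

lemma poch_pos {a : ℝ} (ha : 0 < a) (k : ℕ) : 0 < poch a k :=
  Finset.prod_pos fun i _ => by positivity

lemma factorial_le_poch {a : ℝ} (ha : 1 ≤ a) (k : ℕ) : (k.factorial : ℝ) ≤ poch a k := by
  rw [poch, ← Finset.prod_range_add_one_eq_factorial]
  push_cast
  exact Finset.prod_le_prod (fun i _ => by positivity) (fun i _ => by linarith)

lemma F32_coeff_le_one (k : ℕ) : ((k.factorial : ℝ) / poch (3/2) k) ^ 2 ≤ 1 :=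
  pow_le_one₀ (div_nonneg (by positivity) (poch_pos (by norm_num) k).le)
    (div_le_one_of_le₀ (factorial_le_poch (by norm_num) k) (poch_pos (by norm_num) k).le)

lemma F32_le_inv_one_sub {z : ℝ} (hz0 : 0 ≤ z) (hz1 : z < 1) : F32 z ≤ (1 - z)⁻¹ := by
  have hgeom := summable_geometric_of_lt_one hz0 hz1
  have hterm : ∀ k : ℕ, ((k.factorial : ℝ) / poch (3/2) k) ^ 2 * z ^ k ≤ z ^ k := fun k =>
    mul_le_of_le_one_left (pow_nonneg hz0 k) (F32_coeff_le_one k)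
  calc F32 z ≤ ∑' k : ℕ, z ^ k :=
        (hgeom.of_nonneg_of_le (fun k => by positivity) hterm).tsum_le_tsum hterm hgeom
    _ = (1 - z)⁻¹ := tsum_geometric_of_lt_one hz0 hz1

lemma mul_F32_sq_le {x ρ : ℝ} (hx : 0 ≤ x) (hxρ : x ≤ ρ) (hρ : ρ < 1) :
    x * F32 (x ^ 2) ≤ (1 - ρ ^ 2)⁻¹ * x := by
  have hF : F32 (x ^ 2) ≤ (1 - ρ ^ 2)⁻¹ :=
    (F32_le_inv_one_sub (by positivity) (by nlinarith)).trans
      (inv_anti₀ (by nlinarith) (by nlinarith))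
  rw [mul_comm]
  exact mul_le_mul_of_nonneg_right hF hx

section Decay

variable {E F : Type*} [NormedAddCommGroup E] [NormedAddCommGroup F]

lemma isBigO_one_add_norm_rpow_neg_of_norm_le_div_rpow [ProperSpace E] {f : E → F} {M T α : ℝ}
    (hα : 0 ≤ α) (hf : ∀ x, T ≤ ‖x‖ → ‖f x‖ ≤ M / ‖x‖ ^ α) :
    f =O[cocompact E] fun x => (1 + ‖x‖) ^ (-α) := by
  refine IsBigO.of_bound (|M| * 2 ^ α) ?_
  filter_upwards [tendsto_norm_cocompact_atTop.eventually_ge_atTop (max T 1)] with x hx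
  have hx1 : 1 ≤ ‖x‖ := (le_max_right _ _).trans hx
  have hx0 : 0 < ‖x‖ := one_pos.trans_le hx1
  have hpow : (1 + ‖x‖) ^ α ≤ 2 ^ α * ‖x‖ ^ α := by
    rw [← mul_rpow zero_le_two hx0.le]
    exact rpow_le_rpow (by positivity) (by linarith) hα
  rw [norm_of_nonneg (by positivity), rpow_neg (by positivity), ← div_eq_mul_inv,
    le_div_iff₀ (by positivity)]
  calc ‖f x‖ * (1 + ‖x‖) ^ α ≤ |M| / ‖x‖ ^ α * (2 ^ α * ‖x‖ ^ α) :=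
        mul_le_mul ((hf x ((le_max_left _ _).trans hx)).trans
          (div_le_div_of_nonneg_right (le_abs_self M) (by positivity))) hpow
          (by positivity) (by positivity)
    _ = |M| * 2 ^ α := by field_simp

lemma tendsto_cocompact_zero_of_norm_le_div_rpow [ProperSpace E] {f : E → F} {M T α : ℝ}
    (hα : 0 < α) (hf : ∀ x, T ≤ ‖x‖ → ‖f x‖ ≤ M / ‖x‖ ^ α) :
    Tendsto f (cocompact E) (𝓝 0) :=
  (isBigO_one_add_norm_rpow_neg_of_norm_le_div_rpow hα.le hf).trans_tendsto <|
    (tendsto_rpow_neg_atTop hα).comp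
      (tendsto_atTop_add_const_left _ 1 tendsto_norm_cocompact_atTop)

lemma integrable_of_norm_le_div_rpow [NormedSpace ℝ E] [FiniteDimensional ℝ E] [MeasurableSpace E]
    [BorelSpace E] {μ : Measure E} [μ.IsAddHaarMeasure] {f : E → F} (hf : Continuous f)
    {M T α : ℝ} (hα : Module.finrank ℝ E < α)
    (hdecay : ∀ x, T ≤ ‖x‖ → ‖f x‖ ≤ M / ‖x‖ ^ α) :
    Integrable f μ :=
  hf.locallyIntegrable.integrable_of_isBigO_cocompact
    (isBigO_one_add_norm_rpow_neg_of_norm_le_div_rpow ((Nat.cast_nonneg _).trans hα.le) hdecay)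
    ((integrable_one_add_norm hα).integrableAtFilter _)

end Decay

lemma exists_lt_one_forall_le_of_tendsto_cocompact {X : Type*} [TopologicalSpace X]
    {f : X → ℝ} {s : Set X} (hf : Continuous f) (hs : IsClosed s) (hlt : ∀ x ∈ s, f x < 1)
    (hlim : Tendsto f (cocompact X) (𝓝 0)) : ∃ ρ < 1, ∀ x ∈ s, f x ≤ ρ := by
  rcases s.eq_empty_or_nonempty with rfl | ⟨x₀, hx₀⟩
  · exact ⟨0, one_pos, by simp⟩
  -- truncating at `1/2` makes `f` eventually bounded by its value at `x₀`
  have hevent : ∀ᶠ x in cocompact X ⊓ 𝓟 s, max (f x) (1/2) ≤ max (f x₀) (1/2) :=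
    ((hlim.eventually (gt_mem_nhds one_half_pos)).filter_mono inf_le_left).mono fun x hx =>
      (max_eq_right hx.le).le.trans (le_max_right _ _)
  obtain ⟨x₁, hx₁, hmax⟩ :=
    (hf.max continuous_const).continuousOn.exists_isMaxOn' hs hx₀ hevent
  exact ⟨max (f x₁) (1/2), max_lt (hlt x₁ hx₁) one_half_lt_one,
    fun x hx => (le_max_left _ _).trans (hmax hx)⟩

lemma integrableOn_abs_log_Ioo (a b : ℝ) : IntegrableOn (fun x => |log x|) (Ioo a b) :=
  (intervalIntegral.intervalIntegrable_log' (a := a) (b := b)).abs.def'.mono_set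
    (Ioo_subset_Ioc_self.trans Ioc_subset_uIoc)

lemma lintegral_ofReal_lt_top_of_ae_le {α : Type*} [MeasurableSpace α] {μ : Measure α}
    {f g : α → ℝ} (hg : Integrable g μ) (hfg : f ≤ᵐ[μ] g) :
    ∫⁻ x, ENNReal.ofReal (f x) ∂μ < ⊤ :=
  (lintegral_mono_ae (hfg.mono fun _ hx => ENNReal.ofReal_le_ofReal hx)).trans_lt
    hg.lintegral_lt_top

theorem absolute_integrability_of_autocovariance_bound_general
    (r : ℝ → ℂ) (hcont : Continuous r)
    (hlt : ∀ τ, τ ≠ 0 → ‖r τ‖ < 1)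
    (hlog : ∃ A B ε : ℝ, 0 < A ∧ 0 < B ∧ 0 < ε ∧
      ∀ τ : ℝ, τ ≠ 0 → |τ| < ε →
        ‖r τ‖ * F32 (‖r τ‖^2) ≤ A + B * |Real.log (abs τ)|)
    (hdecay : ∃ M T α : ℝ, 0 < M ∧ 0 < T ∧ 1 < α ∧
      ∀ τ : ℝ, T ≤ |τ| → ‖r τ‖ ≤ M / |τ|^α) :
    (∫⁻ τ : ℝ, ENNReal.ofReal (‖r τ‖ * F32 (‖r τ‖^2))) < ⊤ := by
  obtain ⟨A, B, ε, -, -, hε, hlog⟩ := hlog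
  obtain ⟨M, T, α, -, -, hα, hdecay⟩ := hdecay
  have hr : Tendsto (fun τ => ‖r τ‖) (cocompact ℝ) (𝓝 0) := by
    simpa using (tendsto_cocompact_zero_of_norm_le_div_rpow (by linarith) hdecay).norm
  obtain ⟨ρ, hρ, hrρ⟩ := exists_lt_one_forall_le_of_tendsto_cocompact (s := (ball 0 ε)ᶜ)
    hcont.norm isOpen_ball.isClosed_compl (fun τ hτ => hlt τ fun h => hτ (h ▸ mem_ball_self hε)) hr
  rw [← lintegral_add_compl _ (measurableSet_ball (x := (0 : ℝ)) (ε := ε)),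
    ENNReal.add_lt_top]
  constructor
  · have hmajorant : IntegrableOn (fun τ => A + B * |log (|τ|)|) (ball 0 ε) := by
      simp only [log_abs]
      rw [Real.ball_zero_eq_Ioo]
      exact (integrableOn_const measure_Ioo_lt_top.ne).add
        ((integrableOn_abs_log_Ioo _ _).const_mul B)
    refine lintegral_ofReal_lt_top_of_ae_le hmajorant ?_
    filter_upwards [ae_restrict_mem measurableSet_ball,
      ae_restrict_of_ae (Measure.ae_ne volume 0)] with τ hτε hτ0
    exact hlog τ hτ0 (by simpa using hτε)
  · refine lintegral_ofReal_lt_top_of_ae_le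
      ((integrable_of_norm_le_div_rpow hcont (by simpa using hα) hdecay).norm.const_mul
        (1 - ρ ^ 2)⁻¹).integrableOn ?_
    filter_upwards [ae_restrict_mem measurableSet_ball.compl] with τ hτ
    exact mul_F32_sq_le (norm_nonneg _) (hrρ τ hτ) hρ

/-- If `r` is continuous with `|r| ≤ 1`, `|r| = 1` only at `0` with at most logarithmic
blow-up of `|r| · ₃F₂(1,1,1;3/2,3/2;|r|²)` near `0`, and `|r|` decays faster than
`1/|τ|^α` with `α > 1`, then `|r(τ)| · ₃F₂(1,1,1;3/2,3/2;|r(τ)|²)` is integrable. -/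
theorem absolute_integrability_of_autocovariance_bound
    (r : ℝ → ℂ) (hcont : Continuous r)
    (hle : ∀ τ, ‖r τ‖ ≤ 1)
    (hlt : ∀ τ, τ ≠ 0 → ‖r τ‖ < 1)
    (hlog : ∃ A B ε : ℝ, 0 < A ∧ 0 < B ∧ 0 < ε ∧
      ∀ τ : ℝ, τ ≠ 0 → |τ| < ε →
        ‖r τ‖ * F32 (‖r τ‖^2) ≤ A + B * |Real.log (abs τ)|)
    (hdecay : ∃ M T α : ℝ, 0 < M ∧ 0 < T ∧ 1 < α ∧
      ∀ τ : ℝ, T ≤ |τ| → ‖r τ‖ ≤ M / |τ|^α) :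
    (∫⁻ τ : ℝ, ENNReal.ofReal (‖r τ‖ * F32 (‖r τ‖^2))) < ⊤ :=
  absolute_integrability_of_autocovariance_bound_general r hcont hlt hlog hdecay
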